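/- Let ρ : ℂ → ℂ be a smooth solution of the sigma-model equation ∂∂̄ρ − (2ρ̄/(1+|ρ|²))∂ρ∂̄ρ = 0. Then the function Q := 2·∂ρ·∂ρ̄/(1+|ρ|²)² is holomorphic: ∂̄Q = 0. -/

import Mathlib

open Complex ComplexConjugate

/-- Wirtinger derivative ∂ = (∂ₓ - i∂_y)/2. -/
noncomputable def wd (f : ℂ → ℂ) (z : ℂ) : ℂ :=
  (fderiv ℝ f z 1 - Complex.I * fderiv ℝ f z Complex.I) / 2

/-- Wirtinger derivative ∂̄ = (∂ₓ + i∂_y)/2. -/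
noncomputable def wdb (f : ℂ → ℂ) (z : ℂ) : ℂ :=
  (fderiv ℝ f z 1 + Complex.I * fderiv ℝ f z Complex.I) / 2

lemma wdb_const_mul {f : ℂ → ℂ} {z : ℂ} (c : ℂ) (hf : DifferentiableAt ℝ f z) :
    wdb (fun w => c * f w) z = c * wdb f z := by
  simp only [wdb, fderiv_const_mul hf, ContinuousLinearMap.coe_smul', Pi.smul_apply,
    smul_eq_mul]
  ring

lemma wdb_mul {f g : ℂ → ℂ} {z : ℂ} (hf : DifferentiableAt ℝ f z)
    (hg : DifferentiableAt ℝ g z) :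
    wdb (fun w => f w * g w) z = f z * wdb g z + g z * wdb f z := by
  simp only [wdb, fderiv_fun_mul hf hg, ContinuousLinearMap.add_apply,
    ContinuousLinearMap.smul_apply, smul_eq_mul]
  ring

lemma wdb_const_add {f : ℂ → ℂ} {z : ℂ} (c : ℂ) :
    wdb (fun w => c + f w) z = wdb f z := by
  simp only [wdb, fderiv_const_add]

lemma fderiv_conj_apply {f : ℂ → ℂ} {z : ℂ} (hf : DifferentiableAt ℝ f z) (v : ℂ) :
    fderiv ℝ (fun w => conj (f w)) z v = conj (fderiv ℝ f z v) := by
  have h : HasFDerivAt (fun w => conj (f w))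
      ((Complex.conjCLE : ℂ →L[ℝ] ℂ).comp (fderiv ℝ f z)) z :=
    ((Complex.conjCLE : ℂ →L[ℝ] ℂ).hasFDerivAt).comp z hf.hasFDerivAt
  rw [h.fderiv]
  rfl

lemma wd_conj {f : ℂ → ℂ} {z : ℂ} (hf : DifferentiableAt ℝ f z) :
    wd (fun w => conj (f w)) z = conj (wdb f z) := by
  simp only [wd, wdb, fderiv_conj_apply hf, map_div₀, map_add, map_mul, Complex.conj_I,
    map_ofNat]
  ring

lemma wdb_conj {f : ℂ → ℂ} {z : ℂ} (hf : DifferentiableAt ℝ f z) :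
    wdb (fun w => conj (f w)) z = conj (wd f z) := by
  simp only [wd, wdb, fderiv_conj_apply hf, map_div₀, map_sub, map_mul, Complex.conj_I,
    map_ofNat]
  ring

lemma wdb_inv {f : ℂ → ℂ} {z : ℂ} (hf : DifferentiableAt ℝ f z) (h0 : f z ≠ 0) :
    wdb (fun w => (f w)⁻¹) z = -(wdb f z) / f z ^ 2 := by
  have h : HasFDerivAt (fun w => (f w)⁻¹)
      ((((1 : ℂ →L[ℂ] ℂ).smulRight (-(f z ^ 2)⁻¹)).restrictScalars ℝ).comp (fderiv ℝ f z)) z :=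
    (((hasDerivAt_inv h0).hasFDerivAt).restrictScalars ℝ).comp z hf.hasFDerivAt
  rw [wdb, wdb, h.fderiv]
  simp only [ContinuousLinearMap.coe_comp', Function.comp_apply,
    ContinuousLinearMap.coe_restrictScalars', ContinuousLinearMap.smulRight_apply,
    ContinuousLinearMap.one_apply, smul_eq_mul]
  field_simp
  ring

lemma contDiff_wd {f : ℂ → ℂ} (hf : ContDiff ℝ (⊤ : ℕ∞) f) : ContDiff ℝ (⊤ : ℕ∞) (wd f) := by
  have h : ContDiff ℝ (⊤ : ℕ∞) (fderiv ℝ f) := hf.fderiv_right (by simp)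
  exact ((h.clm_apply contDiff_const).sub
    (contDiff_const.mul (h.clm_apply contDiff_const))).div_const 2

lemma contDiff_wdb {f : ℂ → ℂ} (hf : ContDiff ℝ (⊤ : ℕ∞) f) : ContDiff ℝ (⊤ : ℕ∞) (wdb f) := by
  have h : ContDiff ℝ (⊤ : ℕ∞) (fderiv ℝ f) := hf.fderiv_right (by simp)
  exact ((h.clm_apply contDiff_const).add
    (contDiff_const.mul (h.clm_apply contDiff_const))).div_const 2

lemma wdb_wd_comm {f : ℂ → ℂ} (hf : ContDiff ℝ (⊤ : ℕ∞) f) (z : ℂ) :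
    wdb (fun w => wd f w) z = wd (fun w => wdb f w) z := by
  have h1 : ContDiff ℝ (⊤ : ℕ∞) (fderiv ℝ f) := hf.fderiv_right (by simp)
  have h2 : DifferentiableAt ℝ (fderiv ℝ f) z := (h1.differentiable (by simp)) z
  set F := fderiv ℝ (fderiv ℝ f) z with hF
  have hc : ∀ c : ℂ, HasFDerivAt (fun w => fderiv ℝ f w c) (F.flip c) z := by
    intro c
    have := h2.hasFDerivAt.clm_apply (hasFDerivAt_const c z)
    simpa using this
  have hd : ∀ c : ℂ, DifferentiableAt ℝ (fun w => fderiv ℝ f w c) z :=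
    fun c => (hc c).differentiableAt
  have hsymm : F 1 Complex.I = F Complex.I 1 :=
    (hf.contDiffAt.isSymmSndFDerivAt (by rw [minSmoothness_of_isRCLikeNormedField]; exact WithTop.coe_le_coe.mpr (le_top : (2 : ℕ∞) ≤ ⊤))) 1 Complex.I
  have key : ∀ c v : ℂ, fderiv ℝ (fun w => fderiv ℝ f w c) z v = F v c :=
    fun c v => by rw [(hc c).fderiv]; rfl
  have e1 : ∀ v : ℂ, fderiv ℝ (fun w => wd f w) z v
      = (F v 1 - Complex.I * F v Complex.I) / 2 := by
    intro v
    have : (fun w => wd f w) = fun w =>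
        (fderiv ℝ f w 1 - Complex.I * fderiv ℝ f w Complex.I) * (2:ℂ)⁻¹ := by
      funext w; rw [wd, div_eq_mul_inv]
    rw [this, fderiv_mul_const (c := fun w => fderiv ℝ f w 1 - Complex.I * fderiv ℝ f w Complex.I) (((hd 1).sub ((hd Complex.I).const_mul Complex.I))),
      fderiv_fun_sub (hd 1) ((hd Complex.I).const_mul Complex.I),
      fderiv_const_mul (hd Complex.I)]
    simp only [ContinuousLinearMap.smul_apply, ContinuousLinearMap.sub_apply,
      ContinuousLinearMap.coe_smul', Pi.smul_apply, smul_eq_mul, key]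
    ring
  have e2 : ∀ v : ℂ, fderiv ℝ (fun w => wdb f w) z v
      = (F v 1 + Complex.I * F v Complex.I) / 2 := by
    intro v
    have : (fun w => wdb f w) = fun w =>
        (fderiv ℝ f w 1 + Complex.I * fderiv ℝ f w Complex.I) * (2:ℂ)⁻¹ := by
      funext w; rw [wdb, div_eq_mul_inv]
    rw [this, fderiv_mul_const (c := fun w => fderiv ℝ f w 1 + Complex.I * fderiv ℝ f w Complex.I) (((hd 1).add ((hd Complex.I).const_mul Complex.I))),
      fderiv_fun_add (hd 1) ((hd Complex.I).const_mul Complex.I),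
      fderiv_const_mul (hd Complex.I)]
    simp only [ContinuousLinearMap.smul_apply, ContinuousLinearMap.add_apply,
      ContinuousLinearMap.coe_smul', Pi.smul_apply, smul_eq_mul, key]
    ring
  rw [wdb, wd, e1, e1, e2, e2, hsymm]
  ring

theorem stmt_12 (ρ : ℂ → ℂ) (hρ : ContDiff ℝ (⊤ : ℕ∞) ρ)
    (hσ : ∀ z, wd (fun w => wdb ρ w) z -
      (2 * conj (ρ z) / (1 + ‖ρ z‖ ^ 2)) * wd ρ z * wdb ρ z = 0)
    (Q : ℂ → ℂ)
    (hQ : ∀ z, Q z = 2 * wd ρ z * wd (fun w => conj (ρ w)) z /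
      (1 + ‖ρ z‖ ^ 2) ^ 2) :
    ∀ z, wdb Q z = 0 := by
  intro z
  have hρd : Differentiable ℝ ρ := hρ.differentiable (by simp)
  set ρb : ℂ → ℂ := fun w => conj (ρ w) with hρbdef
  have hρb : ContDiff ℝ (⊤ : ℕ∞) ρb := ((Complex.conjCLE : ℂ →L[ℝ] ℂ).contDiff).comp hρ
  set D : ℂ → ℂ := fun w => 1 + ρ w * ρb w with hDdef
  have hDsm : ContDiff ℝ (⊤ : ℕ∞) D := contDiff_const.add (hρ.mul hρb)
  have hE : ∀ w, (1 + (‖ρ w‖ : ℂ) ^ 2) = D w := by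
    intro w
    have h1 : ((‖ρ w‖ : ℂ)) ^ 2 = ((‖ρ w‖ ^ 2 : ℝ) : ℂ) := by
      push_cast; ring
    rw [hDdef]
    simp only [h1, ← Complex.normSq_eq_norm_sq, hρbdef, Complex.mul_conj]
  have hD0 : ∀ w, D w ≠ 0 := by
    intro w
    rw [← hE w]
    have : (1 + (‖ρ w‖ : ℂ) ^ 2) = ((1 + ‖ρ w‖ ^ 2 : ℝ) : ℂ) := by
      push_cast; ring
    rw [this]
    exact_mod_cast (by positivity : (1 + ‖ρ w‖ ^ 2 : ℝ) ≠ 0)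
  have hdc : conj (D z) = D z := by
    simp only [hDdef, hρbdef, map_add, map_mul, map_one, Complex.conj_conj]
    ring
  -- differentiability facts
  have hAd : Differentiable ℝ (wd ρ) := (contDiff_wd hρ).differentiable (by simp)
  have hBd : Differentiable ℝ (wd ρb) := (contDiff_wd hρb).differentiable (by simp)
  have hwbd : Differentiable ℝ (wdb ρ) := (contDiff_wdb hρ).differentiable (by simp)
  have hDd : Differentiable ℝ D := hDsm.differentiable (by simp)
  have hinv : DifferentiableAt ℝ (fun w => (D w)⁻¹) z := (hDd z).inv (hD0 z)
  -- the sigma-model equation with denominator D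
  have hX : wd (fun w => wdb ρ w) z = 2 * conj (ρ z) / D z * wd ρ z * wdb ρ z := by
    have h := hσ z
    rw [sub_eq_zero] at h
    rw [h, hE z]
  have hBconj : wd ρb = fun w => conj (wdb ρ w) := funext fun w => wd_conj (hρd w)
  have h1 : wdb (fun w => wd ρ w) z = 2 * conj (ρ z) / D z * wd ρ z * wdb ρ z :=
    (wdb_wd_comm hρ z).trans hX
  have h2 : wdb (fun w => wd ρb w) z = conj (2 * conj (ρ z) / D z * wd ρ z * wdb ρ z) := by
    rw [show (fun w => wd ρb w) = fun w => conj (wdb ρ w) from hBconj,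
      wdb_conj (hwbd z), hX]
  have hwbρb : wdb ρb z = conj (wd ρ z) := wdb_conj (hρd z)
  have hDb : wdb D z = ρ z * conj (wd ρ z) + conj (ρ z) * wdb ρ z := by
    rw [hDdef]
    rw [wdb_const_add (f := fun w => ρ w * ρb w) 1, wdb_mul (hρd z) (hρb.differentiable (by simp) z),
      hwbρb, hρbdef]
  have hIb : wdb (fun w => (D w)⁻¹) z = -(wdb D z) / D z ^ 2 := wdb_inv (hDd z) (hD0 z)
  -- rewrite Q
  have hQ' : Q = fun w => (2 * wd ρ w * wd ρb w) * ((D w)⁻¹ * (D w)⁻¹) := by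
    funext w
    rw [hQ w, hE w, div_eq_mul_inv, sq (D w), mul_inv]
  rw [hQ']
  have hu : DifferentiableAt ℝ (fun w => 2 * wd ρ w * wd ρb w) z :=
    (((hAd z).const_mul 2).mul (hBd z))
  have hv : DifferentiableAt ℝ (fun w => (D w)⁻¹ * (D w)⁻¹) z := hinv.mul hinv
  rw [wdb_mul hu hv, wdb_mul hinv hinv,
    wdb_mul (f := fun w => 2 * wd ρ w) (((hAd z).const_mul 2)) (hBd z),
    wdb_const_mul 2 (hAd z), h1, h2, hIb, hDb]
  have hBz : wd ρb z = conj (wdb ρ z) := by rw [hBconj]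
  rw [hBz]
  simp only [map_mul, map_div₀, map_ofNat, Complex.conj_conj, hdc]
  have hd := hD0 z
  field_simp
  ring
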